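/- arXiv:2306.03308 — 3 statements merged into one kernel-verified Lean document; each statement's English description precedes it below -/
import Mathlib

section
/- Let q ≥ 3 be an integer. Then the Kunz language K_q of depth q is not a regular language; i.e., there is no deterministic finite automaton with finitely many states whose accepted language over the alphabet {1,…,q} is K_q. -/
/-- A word over the positive integers (with 1-based indexing) is a Kunz word if
`u_i + u_j ≥ u_{i+j}` whenever `1 ≤ i ≤ j` and `i + j ≤ ℓ`, and
`u_i + u_j + 1 ≥ u_{i+j-(ℓ+1)}` whenever `1 ≤ i ≤ j ≤ ℓ` and `i + j ≥ ℓ + 2`. -/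
def IsKunzWord (w : List ℕ) : Prop :=
  (∀ x ∈ w, 1 ≤ x) ∧
  (∀ i j : ℕ, 1 ≤ i → i ≤ j → i + j ≤ w.length →
    w.getD (i + j - 1) 0 ≤ w.getD (i - 1) 0 + w.getD (j - 1) 0) ∧
  (∀ i j : ℕ, 1 ≤ i → i ≤ j → j ≤ w.length → w.length + 2 ≤ i + j →
    w.getD (i + j - (w.length + 1) - 1) 0 ≤ w.getD (i - 1) 0 + w.getD (j - 1) 0 + 1)

/-- The `q`-Kunz language: Kunz words whose maximum letter equals `q`
(for `q = 0` this is the language consisting of the empty word alone). -/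
def KunzLanguage (q : ℕ) : Set (List ℕ) :=
  {w | IsKunzWord w ∧ w.foldr max 0 = q}

/-- base word: blocks 1^n 2^n ... q^n -/
def baseWord (q n : ℕ) : List ℕ := List.ofFn (fun i : Fin (q * n) => i.1 / n + 1)

lemma baseWord_length (q n : ℕ) : (baseWord q n).length = q * n := by
  simp [baseWord]

lemma baseWord_getD (q n p : ℕ) (hp : p < q * n) :
    (baseWord q n).getD p 0 = p / n + 1 := by
  rw [List.getD_eq_getElem _ _ (by simpa [baseWord_length])]
  simp [baseWord]

lemma key_div (n x y : ℕ) (hn : 1 ≤ n) : (x + y + 1) / n ≤ x / n + y / n + 1 := by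
  rw [Nat.div_le_iff_le_mul_add_pred hn]
  have e : n * (x / n + y / n + 1) = n * (x / n) + n * (y / n) + n := by ring
  rw [e]
  have hx := Nat.div_add_mod x n
  have hy := Nat.div_add_mod y n
  have hx2 := Nat.mod_lt x hn
  have hy2 := Nat.mod_lt y hn
  set A := n * (x / n)
  set B := n * (y / n)
  omega

lemma baseWord_isKunz (q n : ℕ) (hn : 1 ≤ n) : IsKunzWord (baseWord q n) := by
  refine ⟨?_, ?_, ?_⟩
  · intro x hx
    simp only [baseWord, List.mem_ofFn] at hx
    obtain ⟨i, rfl⟩ := hx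
    exact Nat.le_add_left 1 _
  · intro i j hi hij hsum
    rw [baseWord_length] at hsum
    rw [baseWord_getD q n _ (by omega), baseWord_getD q n _ (by omega),
        baseWord_getD q n _ (by omega)]
    have h1 : i + j - 1 = (i - 1) + (j - 1) + 1 := by omega
    rw [h1]
    have := key_div n (i - 1) (j - 1) hn
    omega
  · intro i j hi hij hj hsum
    rw [baseWord_length] at hj hsum ⊢
    rw [baseWord_getD q n _ (by omega), baseWord_getD q n _ (by omega),
        baseWord_getD q n _ (by omega)]
    have h2 : i + j - (q * n + 1) - 1 ≤ (i - 1) + (j - 1) + 1 := by omega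
    have h3 := Nat.div_le_div_right (c := n) h2
    have := key_div n (i - 1) (j - 1) hn
    omega

lemma foldr_max_le {l : List ℕ} {q : ℕ} (h : ∀ x ∈ l, x ≤ q) : l.foldr max 0 ≤ q := by
  induction l with
  | nil => simp
  | cons a t ih =>
    simp only [List.foldr_cons, max_le_iff]
    exact ⟨h a (by simp), ih fun x hx => h x (by simp [hx])⟩

lemma le_foldr_max {l : List ℕ} {a : ℕ} (h : a ∈ l) : a ≤ l.foldr max 0 := by
  induction l with
  | nil => simp at h
  | cons b t ih =>
    simp only [List.foldr_cons, le_max_iff]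
    rcases List.mem_cons.1 h with rfl | h
    · exact Or.inl le_rfl
    · exact Or.inr (ih h)

lemma baseWord_max (q n : ℕ) (hq : 1 ≤ q) (hn : 1 ≤ n) :
    (baseWord q n).foldr max 0 = q := by
  obtain ⟨q', rfl⟩ : ∃ q', q = q' + 1 := ⟨q - 1, by omega⟩
  obtain ⟨n', rfl⟩ : ∃ n', n = n' + 1 := ⟨n - 1, by omega⟩
  have hmul : (q' + 1) * (n' + 1) = (n' + 1) * q' + (n' + 1) := by ring
  have hsub : (q' + 1) * (n' + 1) - 1 = (n' + 1) * q' + n' := by omega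
  have hd : ((q' + 1) * (n' + 1) - 1) / (n' + 1) = q' := by
    rw [hsub, Nat.mul_add_div (by omega)]
    simp [Nat.div_eq_of_lt (show n' < n' + 1 by omega)]
  refine le_antisymm (foldr_max_le ?_) ?_
  · intro x hx
    simp only [baseWord, List.mem_ofFn] at hx
    obtain ⟨i, rfl⟩ := hx
    show i.1 / (n' + 1) + 1 ≤ q' + 1
    have h1 : i.1 ≤ (q' + 1) * (n' + 1) - 1 := by
      have := i.isLt
      omega
    have h2 := Nat.div_le_div_right (c := n' + 1) h1
    rw [hd] at h2
    omega
  · refine le_foldr_max ?_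
    simp only [baseWord, List.mem_ofFn]
    refine ⟨⟨(q' + 1) * (n' + 1) - 1, by omega⟩, ?_⟩
    show ((q' + 1) * (n' + 1) - 1) / (n' + 1) + 1 = q' + 1
    rw [hd]

lemma baseWord_last (q n : ℕ) (hq : 1 ≤ q) (hn : 1 ≤ n) :
    (baseWord q n).getD (q * n - 1) 0 = q := by
  obtain ⟨q', rfl⟩ : ∃ q', q = q' + 1 := ⟨q - 1, by omega⟩
  obtain ⟨n', rfl⟩ : ∃ n', n = n' + 1 := ⟨n - 1, by omega⟩
  have hmul : (q' + 1) * (n' + 1) = (n' + 1) * q' + (n' + 1) := by ring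
  have hsub : (q' + 1) * (n' + 1) - 1 = (n' + 1) * q' + n' := by omega
  rw [baseWord_getD _ _ _ (by omega), hsub, Nat.mul_add_div (by omega),
      Nat.div_eq_of_lt (show n' < n' + 1 by omega)]

lemma pumped_not_kunz (q n e : ℕ) (hq : 3 ≤ q) (hn : 1 ≤ n) (he : q * n ≤ e) :
    ¬ IsKunzWord (List.replicate e 1 ++ baseWord q n) := by
  have hqn : 1 ≤ q * n := by
    calc 1 = 1 * 1 := by ring
    _ ≤ q * n := Nat.mul_le_mul (by omega) hn
  rintro ⟨-, h2, -⟩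
  have hL : (List.replicate e 1 ++ baseWord q n).length = e + q * n := by
    simp [baseWord_length]
  have key := h2 (q * n) e hqn he (by omega)
  -- compute the three getD values
  have v1 : (List.replicate e 1 ++ baseWord q n).getD (q * n - 1) 0 = 1 := by
    rw [List.getD_eq_getElem _ _ (by omega), List.getElem_append_left (by simp; omega)]
    simp
  have v2 : (List.replicate e 1 ++ baseWord q n).getD (e - 1) 0 = 1 := by
    rw [List.getD_eq_getElem _ _ (by omega), List.getElem_append_left (by simp; omega)]
    simp
  have v3 : (List.replicate e 1 ++ baseWord q n).getD (q * n + e - 1) 0 = q := by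
    rw [List.getD_eq_getElem _ _ (by omega),
        List.getElem_append_right (by simp; omega)]
    have hidx : q * n + e - 1 - (List.replicate e 1).length = q * n - 1 := by
      simp; omega
    simp only [hidx]
    rw [← List.getD_eq_getElem _ 0 (by rw [baseWord_length]; omega)]
    exact baseWord_last q n (by omega) hn
  rw [v1, v2, v3] at key
  omega

lemma flatten_replicate_ones (m k : ℕ) :
    (List.replicate m (List.replicate k (1 : ℕ))).flatten = List.replicate (m * k) 1 := by
  induction m with
  | zero => simp
  | succ m ih =>
    rw [List.replicate_succ, List.flatten_cons, ih, Nat.succ_mul, Nat.add_comm,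
      List.replicate_add]

/-- For `q ≥ 3` the `q`-Kunz language is not regular: no deterministic finite automaton
with finitely many states accepts exactly `K_q`. -/
theorem kunz_language_not_regular (q : ℕ) (hq : 3 ≤ q) :
    ¬ Language.IsRegular (KunzLanguage q : Language ℕ) := by
  rintro ⟨σ, fσ, M, hM⟩
  haveI := fσ
  set n := Fintype.card σ + 1 with hn
  have hn1 : 1 ≤ n := by omega
  set x := baseWord q n with hxdef
  have hxmem : x ∈ KunzLanguage q :=
    ⟨baseWord_isKunz q n hn1, baseWord_max q n (by omega) hn1⟩
  have hxacc : x ∈ M.accepts := by rw [hM]; exact hxmem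
  have hxlen : x.length = q * n := baseWord_length q n
  have hnqn : n ≤ q * n := by
    calc n = 1 * n := by ring
    _ ≤ q * n := Nat.mul_le_mul_right n (by omega)
  have hlen : Fintype.card σ ≤ x.length := by omega
  obtain ⟨a, b, c, hx, hab, hbne, hsub⟩ := M.pumping_lemma hxacc hlen
  have hβ : 1 ≤ b.length := List.length_pos_iff.2 hbne
  -- a and b consist entirely of 1's
  have htake : a ++ b = List.replicate (a.length + b.length) (1 : ℕ) := by
    have h1 : a ++ b = x.take (a.length + b.length) := by
      rw [hx]; exact (List.take_left' (by simp)).symm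
    rw [h1]
    apply List.ext_getElem
    · simp; omega
    · intro p hp hp2
      rw [List.getElem_take, List.getElem_replicate]
      have hpx : p < x.length := by simp at hp; omega
      have : x.getD p 0 = p / n + 1 := baseWord_getD q n p (by omega)
      rw [List.getD_eq_getElem _ _ hpx] at this
      have hpn : p < n := by
        simp at hp2
        omega
      rw [this, Nat.div_eq_of_lt hpn]
  obtain ⟨ha, hb⟩ := List.append_inj (htake.trans (List.replicate_add _ _ _)) (by simp)
  -- pump: take m = q*n+1 copies of b
  set m := q * n + 1 with hm
  have hmem : a ++ (List.replicate m b).flatten ++ c ∈ M.accepts := by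
    apply hsub
    show a ++ (List.replicate m b).flatten ++ c ∈ ({a} * KStar.kstar {b} * {c} : Language ℕ)
    rw [Language.mem_mul]
    refine ⟨a ++ (List.replicate m b).flatten, ?_, c, rfl, rfl⟩
    rw [Language.mem_mul]
    exact ⟨a, rfl, (List.replicate m b).flatten, Language.join_mem_kstar
      (fun y hy => List.eq_of_mem_replicate hy), rfl⟩
  rw [hM] at hmem
  have heq : a ++ (List.replicate m b).flatten ++ c
      = List.replicate (q * n * b.length) 1 ++ x := by
    rw [hx, ha, hb, flatten_replicate_ones]
    have harith : a.length + m * b.length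
        = q * n * b.length + (a.length + b.length) := by rw [hm]; ring
    rw [← List.replicate_add, ← List.replicate_add, ← List.append_assoc,
        ← List.replicate_add, harith]
    simp
  rw [heq] at hmem
  exact pumped_not_kunz q n (q * n * b.length) hq hn1
    (Nat.le_mul_of_pos_right _ hβ) hmem.1
end

section
/- Let m ≥ 2 and let (x₁,…,x_{m−1}) be a tuple of integers satisfying: x_i ≥ 1 for 1 ≤ i ≤ m−1; x_i + x_j ≥ x_{i+j} for 1 ≤ i ≤ j ≤ m−1 with i + j < m; and x_i + x_j + 1 ≥ x_{i+j−m} for 1 ≤ i ≤ j ≤ m−1 with i + j > m. Then the set S = {n₀m + n₁(x₁m+1) + ⋯ + n_{m−1}(x_{m−1}m + (m−1)) : n₀,…,n_{m−1} ∈ ℕ} is a numerical semigroup with multiplicity m whose Kunz coordinates tuple equals (x₁,…,x_{m−1}). -/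
/-- A numerical semigroup: a cofinite submonoid of `(ℕ, +)`. -/
structure NumericalSemigroup where
  carrier : Set ℕ
  zero_mem : 0 ∈ carrier
  add_mem : ∀ ⦃a b : ℕ⦄, a ∈ carrier → b ∈ carrier → a + b ∈ carrier
  cofinite : carrierᶜ.Finite

namespace NumericalSemigroup

/-- The multiplicity: the least positive element. -/
noncomputable def multiplicity (S : NumericalSemigroup) : ℕ := sInf {x | x ∈ S.carrier ∧ 0 < x}

/-- The conductor: the least `x` with `x + ℕ ⊆ S`. -/
noncomputable def conductor (S : NumericalSemigroup) : ℕ := sInf {x | ∀ y, x ≤ y → y ∈ S.carrier}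

/-- The depth: `⌈c/m⌉`. -/
noncomputable def depth (S : NumericalSemigroup) : ℕ := S.conductor ⌈/⌉ S.multiplicity

/-- The Apéry set of `S` with respect to its multiplicity `m`:
elements `s ∈ S` with `s - m ∉ S` (as integers, i.e. `s < m` or `s - m ∉ S`). -/
def aperySet (S : NumericalSemigroup) : Set ℕ :=
  {s | s ∈ S.carrier ∧ (s < S.multiplicity ∨ s - S.multiplicity ∉ S.carrier)}

/-- `a_i = min {x ∈ S : x ≡ i (mod m)}`. -/
noncomputable def aperyElt (S : NumericalSemigroup) (i : ℕ) : ℕ :=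
  sInf {x | x ∈ S.carrier ∧ x % S.multiplicity = i % S.multiplicity}

/-- The `i`-th Kunz coordinate `k_i`, where `a_i = k_i·m + i` for `0 < i < m`. -/
noncomputable def kunzCoord (S : NumericalSemigroup) (i : ℕ) : ℕ :=
  (S.aperyElt i - i) / S.multiplicity

end NumericalSemigroup



lemma kunz_key (m : ℕ) (hm : 2 ≤ m) (x : ℕ → ℕ)
    (h2 : ∀ i j : ℕ, 1 ≤ i → i ≤ j → j ≤ m - 1 → i + j < m → x (i + j) ≤ x i + x j)
    (h3 : ∀ i j : ℕ, 1 ≤ i → i ≤ j → j ≤ m - 1 → m < i + j → x (i + j - m) ≤ x i + x j + 1) :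
    ∀ s : ℕ, (∃ c : ℕ → ℕ, s = c 0 * m + ∑ i ∈ Finset.Icc 1 (m - 1), c i * (x i * m + i)) →
    ∀ i : ℕ, 1 ≤ i → i ≤ m - 1 → s % m = i → x i * m + i ≤ s := by
  intro s
  induction s using Nat.strong_induction_on with
  | _ s IH =>
  rintro ⟨c, hs⟩ i hi1 hi2 hsm
  by_cases hall : ∀ j ∈ Finset.Icc 1 (m - 1), c j = 0
  · have hz : s = c 0 * m := by
      rw [hs, Finset.sum_eq_zero, add_zero]
      intro j hj; rw [hall j hj, zero_mul]
    have : s % m = 0 := by rw [hz]; exact Nat.mul_mod_left _ _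
    omega
  · push_neg at hall
    obtain ⟨j, hjmem, hcj⟩ := hall
    obtain ⟨hj1, hj2⟩ := Finset.mem_Icc.mp hjmem
    have hsum : ∑ k ∈ Finset.Icc 1 (m - 1), c k * (x k * m + k)
        = c j * (x j * m + j) + ∑ k ∈ (Finset.Icc 1 (m - 1)).erase j, c k * (x k * m + k) :=
      (Finset.add_sum_erase _ _ hjmem).symm
    set s' : ℕ := c 0 * m + ((c j - 1) * (x j * m + j)
        + ∑ k ∈ (Finset.Icc 1 (m - 1)).erase j, c k * (x k * m + k)) with hs'
    have hdecomp : s = s' + (x j * m + j) := by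
      have h1' : c j * (x j * m + j) = (c j - 1) * (x j * m + j) + (x j * m + j) := by
        have hc : c j - 1 + 1 = c j := Nat.succ_pred_eq_of_pos (Nat.pos_of_ne_zero hcj)
        calc c j * (x j * m + j) = (c j - 1 + 1) * (x j * m + j) := by rw [hc]
        _ = (c j - 1) * (x j * m + j) + (x j * m + j) := by ring
      rw [hs, hsum, hs', h1']; ring
    have hs'mem : ∃ c' : ℕ → ℕ, s' = c' 0 * m + ∑ k ∈ Finset.Icc 1 (m - 1), c' k * (x k * m + k) := by
      refine ⟨Function.update c j (c j - 1), ?_⟩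
      have h0 : Function.update c j (c j - 1) 0 = c 0 := Function.update_of_ne (by omega) _ _
      have hsum2 : ∑ k ∈ Finset.Icc 1 (m - 1), Function.update c j (c j - 1) k * (x k * m + k)
          = (c j - 1) * (x j * m + j) + ∑ k ∈ (Finset.Icc 1 (m - 1)).erase j, c k * (x k * m + k) := by
        rw [← Finset.add_sum_erase _ _ hjmem]
        congr 1
        · rw [Function.update_self]
        · exact Finset.sum_congr rfl fun k hk => by
            rw [Function.update_of_ne (Finset.ne_of_mem_erase hk)]
      rw [h0, hsum2]
    have hlt : s' < s := by omega
    have hgjm : (x j * m + j) % m = j := by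
      rw [add_comm, Nat.add_mul_mod_self_right]
      exact Nat.mod_eq_of_lt (by omega)
    have hmod : s % m = (s' % m + j) % m := by
      rw [hdecomp, Nat.add_mod, hgjm]
    set i' := s' % m with hi'
    have hi'm : i' < m := Nat.mod_lt _ (by omega)
    by_cases hi'0 : i' = 0
    · have hij : i = j := by
        rw [← hsm, hmod, hi'0, zero_add]
        exact Nat.mod_eq_of_lt (by omega)
      subst hij
      rw [hdecomp]
      exact Nat.le_add_left _ _
    · have hIH : x i' * m + i' ≤ s' :=
        IH s' hlt hs'mem i' (by omega) (by omega) rfl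
      rcases Nat.lt_trichotomy (i' + j) m with hlt2 | heq2 | hgt2
      · have hii : i = i' + j := by
          rw [← hsm, hmod]
          exact Nat.mod_eq_of_lt hlt2
        have hx : x (i' + j) ≤ x i' + x j := by
          rcases le_total i' j with hle | hle
          · exact h2 i' j (by omega) hle hj2 hlt2
          · have := h2 j i' hj1 hle (by omega) (by omega)
            rw [add_comm j i'] at this; omega
        have hmulle : x (i' + j) * m ≤ (x i' + x j) * m := Nat.mul_le_mul_right m hx
        have hexp : (x i' + x j) * m = x i' * m + x j * m := by ring
        rw [hii, hdecomp]
        linarith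
      · exfalso
        have : s % m = 0 := by rw [hmod, heq2, Nat.mod_self]
        omega
      · have hmodv : (i' + j) % m = i' + j - m := by
          rw [Nat.mod_eq_sub_mod (le_of_lt hgt2)]
          exact Nat.mod_eq_of_lt (by omega)
        have hii : i = i' + j - m := by
          rw [← hsm, hmod]
          exact hmodv
        have hx : x (i' + j - m) ≤ x i' + x j + 1 := by
          rcases le_total i' j with hle | hle
          · exact h3 i' j (by omega) hle hj2 hgt2
          · have := h3 j i' hj1 hle (by omega) (by omega)
            rw [add_comm j i'] at this; omega
        have hmulle : x (i' + j - m) * m ≤ (x i' + x j + 1) * m := Nat.mul_le_mul_right m hx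
        have hexp : (x i' + x j + 1) * m = x i' * m + x j * m + m := by ring
        have hsub : i' + j - m + m = i' + j := by omega
        rw [hii, hdecomp]
        linarith

/-- realizability -/
theorem kunz_tuple_realizable (m : ℕ) (hm : 2 ≤ m) (x : ℕ → ℕ)
    (h1 : ∀ i : ℕ, 1 ≤ i → i ≤ m - 1 → 1 ≤ x i)
    (h2 : ∀ i j : ℕ, 1 ≤ i → i ≤ j → j ≤ m - 1 → i + j < m → x (i + j) ≤ x i + x j)
    (h3 : ∀ i j : ℕ, 1 ≤ i → i ≤ j → j ≤ m - 1 → m < i + j → x (i + j - m) ≤ x i + x j + 1) :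
    ∃ S : NumericalSemigroup,
      S.carrier = {s : ℕ | ∃ c : ℕ → ℕ,
        s = c 0 * m + ∑ i ∈ Finset.Icc 1 (m - 1), c i * (x i * m + i)} ∧
      S.multiplicity = m ∧
      ∀ i : ℕ, 1 ≤ i → i ≤ m - 1 → S.kunzCoord i = x i := by
  classical
  set C : Set ℕ := {s : ℕ | ∃ c : ℕ → ℕ,
      s = c 0 * m + ∑ i ∈ Finset.Icc 1 (m - 1), c i * (x i * m + i)} with hC
  -- single-generator membership
  have hsingle : ∀ j ∈ Finset.Icc 1 (m - 1), ∀ r q : ℕ,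
      (q * m + r * (x j * m + j)) ∈ C := by
    intro j hj r q
    refine ⟨fun k => if k = 0 then q else if k = j then r else 0, ?_⟩
    obtain ⟨hj1, hj2⟩ := Finset.mem_Icc.mp hj
    have : ∑ k ∈ Finset.Icc 1 (m - 1),
        (if k = 0 then q else if k = j then r else 0) * (x k * m + k)
        = r * (x j * m + j) := by
      rw [Finset.sum_eq_single_of_mem j hj]
      · rw [if_neg (by omega : j ≠ 0), if_pos rfl]
      · intro k hk hkj
        have hk1 := (Finset.mem_Icc.mp hk).1
        rw [if_neg (by omega : k ≠ 0), if_neg hkj, zero_mul]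
    rw [this]
    simp
  have zero_mem : 0 ∈ C := by
    have := hsingle 1 (Finset.mem_Icc.mpr ⟨le_refl 1, by omega⟩) 0 0
    simpa using this
  have add_mem : ∀ ⦃a b : ℕ⦄, a ∈ C → b ∈ C → a + b ∈ C := by
    rintro a b ⟨ca, ha⟩ ⟨cb, hb⟩
    refine ⟨fun k => ca k + cb k, ?_⟩
    rw [ha, hb]
    have : ∑ k ∈ Finset.Icc 1 (m - 1), (ca k + cb k) * (x k * m + k)
        = ∑ k ∈ Finset.Icc 1 (m - 1), ca k * (x k * m + k)
          + ∑ k ∈ Finset.Icc 1 (m - 1), cb k * (x k * m + k) := by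
      rw [← Finset.sum_add_distrib]
      exact Finset.sum_congr rfl fun k _ => by ring
    rw [this]; ring
  have h1mem : (1 : ℕ) ∈ Finset.Icc 1 (m - 1) := Finset.mem_Icc.mpr ⟨le_refl 1, by omega⟩
  have cof : Cᶜ.Finite := by
    apply Set.Finite.subset (Set.finite_Iio (m * (x 1 * m + 1)))
    intro n hn
    by_contra hlt
    apply hn
    have hge : m * (x 1 * m + 1) ≤ n := by simpa using hlt
    set r := n % m with hr
    have hrm : r < m := Nat.mod_lt _ (by omega)
    have hrg : r * (x 1 * m + 1) ≤ n := by
      calc r * (x 1 * m + 1) ≤ m * (x 1 * m + 1) := Nat.mul_le_mul_right _ (le_of_lt hrm)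
      _ ≤ n := hge
    have hdvd : (n - r * (x 1 * m + 1)) % m = 0 := by
      have h1' : r * (x 1 * m + 1) % m = r % m := by
        have : r * (x 1 * m + 1) = r + (r * x 1) * m := by ring
        rw [this, Nat.add_mul_mod_self_right]
      exact Nat.sub_mod_eq_zero_of_mod_eq (by rw [h1', Nat.mod_eq_of_lt hrm])
    obtain ⟨q, hq⟩ := Nat.dvd_of_mod_eq_zero hdvd
    have hn' : n = q * m + r * (x 1 * m + 1) := by
      have e1 : m * q = q * m := Nat.mul_comm m q
      omega
    rw [hn']
    exact hsingle 1 h1mem r q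
  set S : NumericalSemigroup := ⟨C, zero_mem, add_mem, cof⟩ with hS
  have hmmem : m ∈ C := by
    have := hsingle 1 h1mem 0 1
    simpa using this
  have hlb : ∀ t ∈ {y | y ∈ S.carrier ∧ 0 < y}, m ≤ t := by
    rintro t ⟨⟨c, hc⟩, ht⟩
    by_cases hc0 : c 0 = 0
    · by_cases hall : ∀ j ∈ Finset.Icc 1 (m - 1), c j = 0
      · exfalso
        have : t = 0 := by
          rw [hc, hc0, Finset.sum_eq_zero (fun j hj => by rw [hall j hj, zero_mul])]
          ring
        omega
      · push_neg at hall
        obtain ⟨j, hjmem, hcj⟩ := hall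
        obtain ⟨hj1, hj2⟩ := Finset.mem_Icc.mp hjmem
        have hxj : 1 ≤ x j := h1 j hj1 hj2
        have hgj : m ≤ x j * m + j := by
          have : 1 * m ≤ x j * m := Nat.mul_le_mul_right m hxj
          omega
        calc m ≤ x j * m + j := hgj
        _ ≤ c j * (x j * m + j) := Nat.le_mul_of_pos_left _ (Nat.pos_of_ne_zero hcj)
        _ ≤ ∑ k ∈ Finset.Icc 1 (m - 1), c k * (x k * m + k) :=
            Finset.single_le_sum (f := fun k => c k * (x k * m + k)) (fun k _ => Nat.zero_le _) hjmem
        _ ≤ t := by rw [hc]; omega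
    · have : 1 * m ≤ c 0 * m := Nat.mul_le_mul_right m (Nat.pos_of_ne_zero hc0)
      rw [hc]; omega
  have hmul : S.multiplicity = m := by
    apply le_antisymm
    · exact Nat.sInf_le ⟨hmmem, by omega⟩
    · exact le_csInf ⟨m, hmmem, by omega⟩ hlb
  refine ⟨S, rfl, hmul, ?_⟩
  intro i hi1 hi2
  have himem : i ∈ Finset.Icc 1 (m - 1) := Finset.mem_Icc.mpr ⟨hi1, hi2⟩
  have hai : (x i * m + i) ∈ C := by
    have := hsingle i himem 1 0
    simpa using this
  have haim : (x i * m + i) % m = i % m := by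
    have : x i * m + i = i + x i * m := by ring
    rw [this, Nat.add_mul_mod_self_right]
  have hA : S.aperyElt i = x i * m + i := by
    unfold NumericalSemigroup.aperyElt
    rw [hmul]
    apply le_antisymm
    · apply Nat.sInf_le
      exact ⟨hai, haim⟩
    · refine le_csInf ⟨x i * m + i, hai, haim⟩ ?_
      rintro y ⟨hy, hym⟩
      have hilt : i % m = i := Nat.mod_eq_of_lt (by omega)
      exact kunz_key m hm x h2 h3 y hy i hi1 hi2 (by rw [hym, hilt])
  unfold NumericalSemigroup.kunzCoord
  rw [hA, hmul, Nat.add_sub_cancel]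
  exact Nat.mul_div_cancel _ (by omega)
end

section
/- A word w over the alphabet {1,2,3} is in the 3-Kunz language K₃ if and only if w contains the letter 3 at least once and there are no indices 1 ≤ i ≤ j with i + j ≤ |w| such that w_i = w_j = 1 and w_{i+j} = 3. -/
lemma getD_mem_or_zero (w : List ℕ) (n : ℕ) :
    w.getD n 0 ∈ w ∨ w.getD n 0 = 0 := by
  by_cases hn : n < w.length
  · left
    rw [List.getD_eq_getElem _ _ hn]
    exact List.getElem_mem hn
  · right
    exact List.getD_eq_default _ _ (le_of_not_gt hn)

lemma foldr_max_le_s16 {w : List ℕ} (hle : ∀ x ∈ w, x ≤ 3) : w.foldr max 0 ≤ 3 := by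
  induction w with
  | nil => simp
  | cons a t ih =>
    simp only [List.foldr_cons]
    exact max_le (hle a (List.mem_cons_self)) (ih fun x hx => hle x (List.mem_cons_of_mem _ hx))

lemma foldr_max_three {w : List ℕ} (h3 : 3 ∈ w) (hle : ∀ x ∈ w, x ≤ 3) :
    w.foldr max 0 = 3 := by
  induction w with
  | nil => simp at h3
  | cons a t ih =>
    simp only [List.foldr_cons]
    rcases List.mem_cons.mp h3 with rfl | h3'
    · have := foldr_max_le_s16 (fun x hx => hle x (List.mem_cons_of_mem _ hx))
      omega
    · have := ih h3' (fun x hx => hle x (List.mem_cons_of_mem _ hx))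
      have ha := hle a (List.mem_cons_self)
      omega

lemma mem_of_foldr_max_three {w : List ℕ} (h : w.foldr max 0 = 3) : 3 ∈ w := by
  induction w with
  | nil => simp at h
  | cons a t ih =>
    simp only [List.foldr_cons] at h
    rcases max_cases a (t.foldr max 0) with ⟨he, _⟩ | ⟨he, _⟩ <;> rw [he] at h
    · exact h ▸ List.mem_cons_self
    · exact List.mem_cons_of_mem _ (ih h)

/-- A word over `{1,2,3}` is in the 3-Kunz language iff it contains a 3 and there are no
indices `1 ≤ i ≤ j` with `i + j ≤ |w|`, `w_i = w_j = 1` and `w_{i+j} = 3`. -/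
theorem mem_kunzLanguage_three_iff (w : List ℕ) (h : ∀ x ∈ w, x = 1 ∨ x = 2 ∨ x = 3) :
    w ∈ KunzLanguage 3 ↔
      (3 ∈ w ∧ ¬ ∃ i j : ℕ, 1 ≤ i ∧ i ≤ j ∧ i + j ≤ w.length ∧
        w.getD (i - 1) 0 = 1 ∧ w.getD (j - 1) 0 = 1 ∧ w.getD (i + j - 1) 0 = 3) := by
  have hle3 : ∀ x ∈ w, x ≤ 3 := fun x hx => by rcases h x hx with rfl | rfl | rfl <;> omega
  have hD3 : ∀ n, w.getD n 0 ≤ 3 := fun n => by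
    rcases getD_mem_or_zero w n with hm | hz
    · exact hle3 _ hm
    · omega
  have hDmem : ∀ n, n < w.length → 1 ≤ w.getD n 0 := fun n hn => by
    rw [List.getD_eq_getElem _ _ hn]
    rcases h _ (List.getElem_mem hn) with he | he | he <;> omega
  constructor
  · rintro ⟨⟨_, hsub, _⟩, hmax⟩
    refine ⟨mem_of_foldr_max_three hmax, ?_⟩
    rintro ⟨i, j, hi, hij, hsum, h1, h2, h3⟩
    have := hsub i j hi hij hsum
    omega
  · rintro ⟨h3, hno⟩
    refine ⟨⟨fun x hx => by rcases h x hx with rfl | rfl | rfl <;> omega, ?_, ?_⟩,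
      foldr_max_three h3 hle3⟩
    · intro i j hi hij hsum
      have hiv : 1 ≤ w.getD (i - 1) 0 := hDmem _ (by omega)
      have hjv : 1 ≤ w.getD (j - 1) 0 := hDmem _ (by omega)
      have hv := hD3 (i + j - 1)
      by_contra hc
      push_neg at hc
      exact hno ⟨i, j, hi, hij, hsum, by omega, by omega, by omega⟩
    · intro i j hi hij hj hsum
      have hiv : 1 ≤ w.getD (i - 1) 0 := hDmem _ (by omega)
      have hjv : 1 ≤ w.getD (j - 1) 0 := hDmem _ (by omega)
      have hv := hD3 (i + j - (w.length + 1) - 1)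
      omega
end
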